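/- Let X be a real Banach space such that X* has the Krein–Milman property (equivalently, X is an Asplund space), and let ‖·‖₁ and ‖·‖₂ be two equivalent dual norms on X*. If the unit sphere of (X*, ‖·‖₁), equipped with the relative w*-topology, has property (*), then the unit sphere of (X*, ‖·‖₂), equipped with the relative w*-topology, also has property (*). -/

import Mathlib

/-- A topological space `T` has property (*). -/
def HasStarProperty (T : Type*) [TopologicalSpace T] : Prop :=
  ∃ 𝒰 : ℕ → Set (Set T),
    (∀ j, ∀ U ∈ 𝒰 j, IsOpen U) ∧
    ∀ x y : T, ∃ j, ({x, y} ∩ ⋃₀ 𝒰 j).Nonempty ∧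
      ∀ U ∈ 𝒰 j, ({x, y} ∩ U).Subsingleton

/-- `N` is an equivalent dual norm on `X*`: a norm equivalent to the operator norm that is
lower semicontinuous with respect to the weak-star topology. -/
def IsEquivDualNorm (X : Type*) [NormedAddCommGroup X] [NormedSpace ℝ X]
    (N : (X →L[ℝ] ℝ) → ℝ) : Prop :=
  (∀ f g : X →L[ℝ] ℝ, N (f + g) ≤ N f + N g) ∧
  (∀ (c : ℝ) (f : X →L[ℝ] ℝ), N (c • f) = |c| * N f) ∧
  (∃ c d : ℝ, 0 < c ∧ 0 < d ∧ ∀ f : X →L[ℝ] ℝ, c * ‖f‖ ≤ N f ∧ N f ≤ d * ‖f‖) ∧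
  LowerSemicontinuous fun f : WeakDual ℝ X => N (WeakDual.toStrongDual f)

/-!
Away from `0`, a point `f` of the weak-star dual is determined by the pair `(N₁ f, f / N₁ f)`,
whose second coordinate lies on the `N₁`-sphere. The first coordinate is only weak-star lower
semicontinuous, but that suffices: two points on different levels of `N₁` are separated by a
set `{q < N₁}` with `q` rational, while on a thin slab `q₁ < N₁ < q₂` the normalisation is
continuous, so open sets on the `N₁`-sphere pull back to open sets. Indexing the new families by
the rationals `q, q₁, q₂` and the index `j` of the old ones keeps their number countable.
-/

open Filter Topology Set

theorem HasStarProperty.of_countable {T : Type*} [TopologicalSpace T] {ι : Type*} [Countable ι]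
    [Nonempty ι] (𝒱 : ι → Set (Set T)) (hopen : ∀ i, ∀ V ∈ 𝒱 i, IsOpen V)
    (h : ∀ x y : T, ∃ i, ({x, y} ∩ ⋃₀ 𝒱 i).Nonempty ∧ ∀ V ∈ 𝒱 i, ({x, y} ∩ V).Subsingleton) :
    HasStarProperty T := by
  obtain ⟨e, he⟩ := exists_surjective_nat ι
  refine ⟨𝒱 ∘ e, fun j => hopen (e j), fun x y => ?_⟩
  obtain ⟨i, hi⟩ := h x y
  obtain ⟨j, rfl⟩ := he i
  exact ⟨j, hi⟩

theorem exists_rat_Ioo_subset_of_mem_nhds {a : ℝ} {s : Set ℝ} (hs : s ∈ 𝓝 a) :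
    ∃ q₁ q₂ : ℚ, a ∈ Ioo (q₁ : ℝ) q₂ ∧ Ioo (q₁ : ℝ) q₂ ⊆ s := by
  obtain ⟨l, u, ⟨hl, hu⟩, hsub⟩ := mem_nhds_iff_exists_Ioo_subset.1 hs
  obtain ⟨q₁, hlq₁, hq₁⟩ := exists_rat_btwn hl
  obtain ⟨q₂, hq₂, hq₂u⟩ := exists_rat_btwn hu
  exact ⟨q₁, q₂, ⟨hq₁, hq₂⟩, (Ioo_subset_Ioo hlq₁.le hq₂u.le).trans hsub⟩

theorem exists_rat_pair_inter_setOf_lt_eq {T : Type*} {n : T → ℝ} {x y : T} (hxy : n x < n y) :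
    ∃ q : ℚ, {x, y} ∩ {t | (q : ℝ) < n t} = {y} := by
  obtain ⟨q, hxq, hqy⟩ := exists_rat_btwn hxy
  refine ⟨q, subset_antisymm ?_ (singleton_subset_iff.2 ⟨by simp, hqy⟩)⟩
  rintro t ⟨rfl | rfl, ht⟩
  · exact absurd ht hxq.not_gt
  · rfl

section LowerSemicontinuous

variable {T S : Type*} [TopologicalSpace T] [TopologicalSpace S]

def starFamilies (n : T → ℝ) (π : T → S) (𝒰 : ℕ → Set (Set S)) :
    ℚ ⊕ (ℕ × ℚ × ℚ) → Set (Set T)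
  | .inl q => {{t | (q : ℝ) < n t}}
  | .inr (j, q₁, q₂) =>
      {V | IsOpen V ∧ ∃ U ∈ 𝒰 j, ∀ t ∈ V, n t ∈ Ioo (q₁ : ℝ) q₂ → π t ∈ U}

theorem exists_starFamilies_of_level_eq {n : T → ℝ} {π : T → S} {𝒰 : ℕ → Set (Set S)}
    (h𝒰open : ∀ j, ∀ U ∈ 𝒰 j, IsOpen U)
    (h𝒰 : ∀ x y : S, ∃ j, ({x, y} ∩ ⋃₀ 𝒰 j).Nonempty ∧ ∀ U ∈ 𝒰 j, ({x, y} ∩ U).Subsingleton)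
    (hinj : ∀ x y, n x = n y → π x = π y → x = y)
    (hπ : ∀ x, Tendsto π (𝓝 x ⊓ comap n (𝓝 (n x))) (𝓝 (π x))) {x y : T} (hxy : n x = n y) :
    ∃ i, ({x, y} ∩ ⋃₀ starFamilies n π 𝒰 i).Nonempty ∧
      ∀ V ∈ starFamilies n π 𝒰 i, ({x, y} ∩ V).Subsingleton := by
  obtain ⟨j, ⟨z, hz, U₀, hU₀, hzU₀⟩, hsub⟩ := h𝒰 (π x) (π y)
  obtain ⟨t, ht, htU₀⟩ : ∃ t ∈ ({x, y} : Set T), π t ∈ U₀ := by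
    rcases hz with rfl | rfl
    exacts [⟨x, by simp, hzU₀⟩, ⟨y, by simp, hzU₀⟩]
  have hnt : n t = n x := by rcases ht with rfl | rfl <;> simp [hxy]
  obtain ⟨W, hW, I, hI, hWI⟩ :=
    mem_inf_iff_superset.1 (hπ t ((h𝒰open j U₀ hU₀).mem_nhds htU₀))
  obtain ⟨I', hI', hI'I⟩ := mem_comap.1 hI
  obtain ⟨q₁, q₂, hq, hqI'⟩ := exists_rat_Ioo_subset_of_mem_nhds hI'
  refine ⟨.inr (j, q₁, q₂), ⟨t, ht, interior W, ⟨isOpen_interior, U₀, hU₀, ?_⟩,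
    mem_interior_iff_mem_nhds.2 hW⟩, ?_⟩
  · exact fun s hs hns => hWI ⟨interior_subset hs, hI'I (hqI' hns)⟩
  · rintro V ⟨-, U, hU, hVU⟩ a ⟨ha, haV⟩ b ⟨hb, hbV⟩
    have hlevel : ∀ s ∈ ({x, y} : Set T), n s = n x := by
      rintro s (rfl | rfl) <;> simp [hxy]
    have hmem : ∀ s ∈ ({x, y} : Set T), s ∈ V → π s ∈ {π x, π y} ∩ U := by
      intro s hs hsV
      refine ⟨by rcases hs with rfl | rfl <;> simp, hVU s hsV ?_⟩
      rw [hlevel s hs, ← hnt]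
      exact hq
    exact hinj a b ((hlevel a ha).trans (hlevel b hb).symm)
      (hsub U hU (hmem a ha haV) (hmem b hb hbV))

theorem HasStarProperty.of_lowerSemicontinuous (hS : HasStarProperty S) {n : T → ℝ}
    (hn : LowerSemicontinuous n) {π : T → S} (hinj : ∀ x y, n x = n y → π x = π y → x = y)
    (hπ : ∀ x, Tendsto π (𝓝 x ⊓ comap n (𝓝 (n x))) (𝓝 (π x))) : HasStarProperty T := by
  obtain ⟨𝒰, h𝒰open, h𝒰⟩ := hS
  refine HasStarProperty.of_countable (starFamilies n π 𝒰) ?_ fun x y => ?_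
  · rintro (q | ⟨j, q₁, q₂⟩) V hV
    · rw [mem_singleton_iff.1 hV]
      exact hn.isOpen_preimage q
    · exact hV.1
  rcases lt_trichotomy (n x) (n y) with hlt | heq | hgt
  · obtain ⟨q, hq⟩ := exists_rat_pair_inter_setOf_lt_eq hlt
    exact ⟨.inl q, by simp [starFamilies, hq], by simp [starFamilies, hq]⟩
  · exact exists_starFamilies_of_level_eq h𝒰open h𝒰 hinj hπ heq
  · obtain ⟨q, hq⟩ := exists_rat_pair_inter_setOf_lt_eq hgt
    rw [pair_comm]
    exact ⟨.inl q, by simp [starFamilies, hq], by simp [starFamilies, hq]⟩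

end LowerSemicontinuous

theorem HasStarProperty.of_sphere {E : Type*} [TopologicalSpace E] [MulAction ℝ E]
    [ContinuousSMul ℝ E] {N : E → ℝ} (hN : LowerSemicontinuous N)
    (hsmul : ∀ c : ℝ, 0 < c → ∀ f, N (c • f) = c * N f) {T : Set E} (hT : ∀ f ∈ T, 0 < N f)
    (hS : HasStarProperty {f // N f = 1}) : HasStarProperty T := by
  let π : T → {f // N f = 1} := fun f =>
    ⟨(N f)⁻¹ • f, by rw [hsmul _ (inv_pos.2 (hT f f.2)), inv_mul_cancel₀ (hT f f.2).ne']⟩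
  refine hS.of_lowerSemicontinuous (hN.comp continuous_subtype_val) (π := π) ?_ fun x => ?_
  · intro x y hxy hπ
    change N x = N y at hxy
    have hval : (N x)⁻¹ • (x : E) = (N x)⁻¹ • (y : E) := by
      simpa only [π, ← hxy] using congrArg Subtype.val hπ
    exact Subtype.ext ((IsUnit.mk0 _ (inv_ne_zero (hT x x.2).ne')).smul_left_cancel.1 hval)
  · rw [tendsto_subtype_rng]
    exact ((tendsto_comap.mono_left inf_le_right).inv₀ (hT x x.2).ne').smul
      (continuous_subtype_val.continuousAt.mono_left inf_le_left)

namespace IsEquivDualNorm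

variable {X : Type*} [NormedAddCommGroup X] [NormedSpace ℝ X] {N : (X →L[ℝ] ℝ) → ℝ}

theorem map_zero (hN : IsEquivDualNorm X N) : N 0 = 0 := by
  simpa using hN.2.1 0 0

theorem pos_of_ne_zero (hN : IsEquivDualNorm X N) {f : X →L[ℝ] ℝ} (hf : f ≠ 0) : 0 < N f := by
  obtain ⟨c, _, hc, _, hbound⟩ := hN.2.2.1
  exact (mul_pos hc (norm_pos_iff.2 hf)).trans_le (hbound f).1

end IsEquivDualNorm

theorem statement12_general (X : Type*) [NormedAddCommGroup X] [NormedSpace ℝ X]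
    (N₁ N₂ : (X →L[ℝ] ℝ) → ℝ)
    (hN₁ : IsEquivDualNorm X N₁) (hN₂ : IsEquivDualNorm X N₂)
    (hstar : HasStarProperty {f : WeakDual ℝ X // N₁ (WeakDual.toStrongDual f) = 1}) :
    HasStarProperty {f : WeakDual ℝ X // N₂ (WeakDual.toStrongDual f) = 1} := by
  have hsmul : ∀ c : ℝ, 0 < c → ∀ f : WeakDual ℝ X,
      N₁ (WeakDual.toStrongDual (c • f)) = c * N₁ (WeakDual.toStrongDual f) := fun c hc f => by
    simpa [abs_of_pos hc] using hN₁.2.1 c (WeakDual.toStrongDual f)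
  have hpos : ∀ f ∈ {f : WeakDual ℝ X | N₂ (WeakDual.toStrongDual f) = 1},
      0 < N₁ (WeakDual.toStrongDual f) := fun f (hf : N₂ _ = 1) =>
    hN₁.pos_of_ne_zero fun h0 => zero_ne_one (hN₂.map_zero ▸ h0 ▸ hf)
  exact HasStarProperty.of_sphere hN₁.2.2.2 hsmul hpos hstar

/-- If `X` is an Asplund space (dual with the Krein–Milman property) and `N₁`, `N₂` are two
equivalent dual norms on `X*`, then if the unit sphere of `N₁` with the relative weak-star
topology has property (*), so does the unit sphere of `N₂`. -/
theorem statement12 (X : Type*) [NormedAddCommGroup X] [NormedSpace ℝ X] [CompleteSpace X]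
    (hKMP : ∀ B : Set (X →L[ℝ] ℝ), IsClosed B → Bornology.IsBounded B → Convex ℝ B →
      B = closure (convexHull ℝ (Set.extremePoints ℝ B)))
    (N₁ N₂ : (X →L[ℝ] ℝ) → ℝ)
    (hN₁ : IsEquivDualNorm X N₁) (hN₂ : IsEquivDualNorm X N₂)
    (hstar : HasStarProperty {f : WeakDual ℝ X // N₁ (WeakDual.toStrongDual f) = 1}) :
    HasStarProperty {f : WeakDual ℝ X // N₂ (WeakDual.toStrongDual f) = 1} :=
  statement12_general X N₁ N₂ hN₁ hN₂ hstar
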